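/- Let k ≥ 2, A = M_k, B = P₄ ∪ M_{k-2}, F = A + B, and let H be the graph obtained from K_{k-1} + K(V₁,V₂,V₃) (complete 3-partite graph joined to a clique on k-1 vertices) by adding one edge xy inside V₁, where |V_i| ≥ 3k for each i. Then in every copy of F in H, either all vertices of A lie in X ∪ V₁ and all vertices of B lie in V₂ ∪ V₃, or all vertices of B lie in X ∪ V₁ and all vertices of A lie in V₂ ∪ V₃ (where X is the vertex set of the clique K_{k-1}). -/

import Mathlib

open SimpleGraph

/-- The join `G + H` of two graphs: their disjoint union together with all edges between them. -/
def joinG {α β : Type*} (G : SimpleGraph α) (H : SimpleGraph β) : SimpleGraph (α ⊕ β) where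
  Adj u v := match u, v with
    | Sum.inl a, Sum.inl b => G.Adj a b
    | Sum.inr a, Sum.inr b => H.Adj a b
    | _, _ => True
  symm := by
    constructor
    intro u v h
    cases u <;> cases v <;> first | exact G.symm.symm _ _ h | exact H.symm.symm _ _ h | trivial
  loopless := by
    constructor
    intro u
    cases u with
    | inl a => exact G.loopless.irrefl a
    | inr a => exact H.loopless.irrefl a

/-- The matching `M_k` with `k` edges, realised on `Fin k × Fin 2`. -/
def matchingGraph (k : ℕ) : SimpleGraph (Fin k × Fin 2) where
  Adj u v := u.1 = v.1 ∧ u.2 ≠ v.2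
  symm := ⟨fun _ _ h => ⟨h.1.symm, h.2.symm⟩⟩
  loopless := ⟨fun _ h => h.2 rfl⟩

/-- The label (class) of a vertex of `K_{j} + K(V₁,V₂,V₃)`: `0` for the clique `X`, and
`1,2,3` for the three parts. -/
def labF {V₁ V₂ V₃ : Type*} {j : ℕ} : Fin j ⊕ (V₁ ⊕ V₂ ⊕ V₃) → ℕ
  | Sum.inl _ => 0
  | Sum.inr (Sum.inl _) => 1
  | Sum.inr (Sum.inr (Sum.inl _)) => 2
  | Sum.inr (Sum.inr (Sum.inr _)) => 3

/-- The host graph `H`: the complete 3-partite graph `K(V₁,V₂,V₃)` joined to a clique on `j`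
vertices, with one extra edge `xy` added inside `V₁`. -/
def hostGraph {V₁ V₂ V₃ : Type*} (j : ℕ) (x y : V₁) (hxy : x ≠ y) :
    SimpleGraph (Fin j ⊕ (V₁ ⊕ V₂ ⊕ V₃)) where
  Adj u v := (labF u ≠ labF v) ∨ (labF u = 0 ∧ labF v = 0 ∧ u ≠ v) ∨
    (u = Sum.inr (Sum.inl x) ∧ v = Sum.inr (Sum.inl y)) ∨
    (u = Sum.inr (Sum.inl y) ∧ v = Sum.inr (Sum.inl x))
  symm := by
    constructor
    rintro u v (h | ⟨h1, h2, h3⟩ | ⟨h1, h2⟩ | ⟨h1, h2⟩)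
    · exact Or.inl h.symm
    · exact Or.inr (Or.inl ⟨h2, h1, h3.symm⟩)
    · exact Or.inr (Or.inr (Or.inr ⟨h2, h1⟩))
    · exact Or.inr (Or.inr (Or.inl ⟨h2, h1⟩))
  loopless := by
    constructor
    rintro u (h | ⟨h1, h2, h3⟩ | ⟨h1, h2⟩ | ⟨h1, h2⟩)
    · exact h rfl
    · exact h3 rfl
    · have h := h1.symm.trans h2
      simp only [Sum.inr.injEq, Sum.inl.injEq] at h
      exact hxy h
    · have h := h1.symm.trans h2
      simp only [Sum.inr.injEq, Sum.inl.injEq] at h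
      exact hxy h.symm

/-!
Call the vertices of `X ∪ V₁` low and those of `V₂ ∪ V₃` high. The low part is `K_{k-1}` plus
the single edge `xy`: it has the vertex cover `X ∪ {x}` of size `k`, too small for `K₁ + M_k`, and
it contains no `K_{k,k}`. If all of `A` is low, a low vertex of `B` would be the apex of a
`K₁ + M_k` in the low part, so all of `B` is high; symmetrically for `B`, whose `k` disjoint edges
come from `P₄ ∪ M_{k-2}`. Otherwise `A` and `B` both have a high vertex; as the high part is
bipartite, every edge on either side then has a low endpoint, and these `2k` endpoints span a low
`K_{k,k}`.
-/

open Function Finset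

section Pigeonhole

variable {ι W : Type*} [Fintype ι] {ψ : ι → W} {s : Finset W}

theorem card_le_card_of_injective_of_forall_mem (hψ : Injective ψ) (hs : ∀ i, ψ i ∈ s) :
    Fintype.card ι ≤ s.card :=
  card_le_card_of_injOn ψ (fun i _ => hs i) hψ.injOn

theorem exists_apply_notMem_of_card_lt (hψ : Injective ψ) (h : s.card < Fintype.card ι) :
    ∃ i, ψ i ∉ s := by
  by_contra! hs
  exact h.not_ge (card_le_card_of_injective_of_forall_mem hψ hs)

end Pigeonhole

section Covers

variable {W : Type*} {H : SimpleGraph W} {L : Set W}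

/-- `K₁ + M_m` has no vertex cover with `m` vertices: a cover avoiding the apex contains all `2m`
of its neighbours, and one containing it still needs an endpoint of each of the `m` edges. -/
theorem card_lt_card_of_cover_of_matching_apex {ι : Type*} [Fintype ι] [Nonempty ι]
    {C : Finset W} (hC : ∀ u ∈ L, ∀ v ∈ L, H.Adj u v → u ∈ C ∨ v ∈ C)
    {e : ι × Fin 2 → W} (he : Injective e) (heL : ∀ p, e p ∈ L)
    (hedge : ∀ i, H.Adj (e (i, 0)) (e (i, 1)))
    {w : W} (hwL : w ∈ L) (hw : ∀ p, H.Adj w (e p)) : Fintype.card ι < C.card := by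
  by_cases hwC : w ∈ C
  · have hend : ∀ i, ∃ t, e (i, t) ∈ C := fun i =>
      (hC _ (heL _) _ (heL _) (hedge i)).elim (fun h => ⟨0, h⟩) (fun h => ⟨1, h⟩)
    choose t ht using hend
    have hinj : Injective fun o : Option ι => o.elim w fun i => e (i, t i) := by
      rintro (_ | i) (_ | i') h
      · rfl
      · exact absurd h (H.ne_of_adj (hw _))
      · exact absurd h.symm (H.ne_of_adj (hw _))
      · exact congrArg some (congrArg Prod.fst (he h))
    have hcard := card_le_card_of_injective_of_forall_mem hinj
      (by rintro (_ | i); exacts [hwC, ht i])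
    rw [Fintype.card_option] at hcard
    omega
  · have hcard := card_le_card_of_injective_of_forall_mem he
      fun p => (hC _ hwL _ (heL p) (hw p)).resolve_left hwC
    rw [Fintype.card_prod, Fintype.card_fin] at hcard
    have := Fintype.card_pos (α := ι)
    omega

/-- Each side has a vertex outside `X`, and these pin every vertex outside `X` to `{x, y}`. -/
theorem card_add_card_le_of_completeBipartite {ιA ιB : Type*} [Fintype ιA] [Fintype ιB]
    {X : Finset W} {x y : W}
    (hL : ∀ u ∈ L, ∀ v ∈ L, u ∉ X → v ∉ X → H.Adj u v → (u = x ∧ v = y) ∨ (u = y ∧ v = x))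
    {ψ : ιA ⊕ ιB → W} (hψ : Injective ψ) (hψL : ∀ p, ψ p ∈ L)
    (hadj : ∀ a b, H.Adj (ψ (.inl a)) (ψ (.inr b)))
    (hA : X.card < Fintype.card ιA) (hB : X.card < Fintype.card ιB) :
    Fintype.card ιA + Fintype.card ιB ≤ X.card + 2 := by
  classical
  obtain ⟨a₀, ha₀⟩ := exists_apply_notMem_of_card_lt (hψ.comp Sum.inl_injective) hA
  obtain ⟨b₀, hb₀⟩ := exists_apply_notMem_of_card_lt (hψ.comp Sum.inr_injective) hB
  have hmem : ∀ p, ψ p ∈ insert x (insert y X) := by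
    rintro (a | b)
    · by_cases ha : ψ (.inl a) ∈ X
      · simp [ha]
      · rcases hL _ (hψL _) _ (hψL _) ha hb₀ (hadj a b₀) with ⟨h, -⟩ | ⟨h, -⟩ <;> simp [h]
    · by_cases hb : ψ (.inr b) ∈ X
      · simp [hb]
      · rcases hL _ (hψL _) _ (hψL _) ha₀ hb (hadj a₀ b) with ⟨-, h⟩ | ⟨-, h⟩ <;> simp [h]
  have hcard := card_le_card_of_injective_of_forall_mem hψ hmem
  rw [Fintype.card_sum] at hcard
  have := card_insert_le x (insert y X)
  have := card_insert_le y X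
  omega

end Covers

section HostGraph

variable {V₁ V₂ V₃ : Type*} {j : ℕ} {x y : V₁} {hxy : x ≠ y} {u v w : Fin j ⊕ (V₁ ⊕ V₂ ⊕ V₃)}

/-- The clique `X` of the host graph. -/
def cliqueVertices (j : ℕ) (V₁ V₂ V₃ : Type*) : Finset (Fin j ⊕ (V₁ ⊕ V₂ ⊕ V₃)) :=
  univ.map Embedding.inl

@[simp]
theorem card_cliqueVertices : (cliqueVertices j V₁ V₂ V₃).card = j := by
  simp [cliqueVertices]

theorem mem_cliqueVertices_iff : u ∈ cliqueVertices j V₁ V₂ V₃ ↔ labF u = 0 := by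
  rcases u with c | (v | v | v) <;> simp [cliqueVertices, labF]

theorem labF_le_three (u : Fin j ⊕ (V₁ ⊕ V₂ ⊕ V₃)) : labF u ≤ 3 := by
  rcases u with c | (v | v | v) <;> simp [labF]

theorem labF_ne_of_hostGraph_adj (h : (hostGraph j x y hxy).Adj u v) (hu : 2 ≤ labF u) :
    labF u ≠ labF v := by
  rcases h with h | ⟨h, -⟩ | ⟨rfl, -⟩ | ⟨rfl, -⟩
  · exact h
  · omega
  all_goals simp [labF] at hu

/-- `V₂ ∪ V₃` induces a bipartite graph. -/
theorem exists_labF_le_one_of_hostGraph_adj_of_high {u : Fin 2 → Fin j ⊕ (V₁ ⊕ V₂ ⊕ V₃)}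
    (hu : (hostGraph j x y hxy).Adj (u 0) (u 1)) (hw : 2 ≤ labF w)
    (hwu : ∀ t, (hostGraph j x y hxy).Adj w (u t)) : ∃ t, labF (u t) ≤ 1 := by
  by_contra! h
  have := h 0
  have := h 1
  have := labF_ne_of_hostGraph_adj hu (by omega)
  have := labF_ne_of_hostGraph_adj (hwu 0) hw
  have := labF_ne_of_hostGraph_adj (hwu 1) hw
  have := labF_le_three (u 0)
  have := labF_le_three (u 1)
  have := labF_le_three w
  omega

theorem hostGraph_adj_of_low_of_notMem_cliqueVertices :
    ∀ u ∈ {u | labF u ≤ 1}, ∀ v ∈ {u | labF u ≤ 1},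
      u ∉ cliqueVertices j V₁ V₂ V₃ → v ∉ cliqueVertices j V₁ V₂ V₃ →
      (hostGraph j x y hxy).Adj u v →
      (u = .inr (.inl x) ∧ v = .inr (.inl y)) ∨ (u = .inr (.inl y) ∧ v = .inr (.inl x)) := by
  intro u hu v hv hu₀ hv₀ h
  rw [mem_cliqueVertices_iff] at hu₀ hv₀
  rcases h with h | ⟨h, -⟩ | h | h
  · have : labF u ≤ 1 := hu
    have : labF v ≤ 1 := hv
    omega
  · omega
  · exact .inl h
  · exact .inr h

theorem hostGraph_low_cover [DecidableEq (Fin j ⊕ (V₁ ⊕ V₂ ⊕ V₃))] :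
    ∀ u ∈ {u | labF u ≤ 1}, ∀ v ∈ {u | labF u ≤ 1}, (hostGraph j x y hxy).Adj u v →
      u ∈ insert (.inr (.inl x)) (cliqueVertices j V₁ V₂ V₃) ∨
      v ∈ insert (.inr (.inl x)) (cliqueVertices j V₁ V₂ V₃) := by
  intro u hu v hv h
  by_cases hu₀ : u ∈ cliqueVertices j V₁ V₂ V₃
  · exact .inl (mem_insert_of_mem hu₀)
  by_cases hv₀ : v ∈ cliqueVertices j V₁ V₂ V₃
  · exact .inr (mem_insert_of_mem hv₀)
  rcases hostGraph_adj_of_low_of_notMem_cliqueVertices u hu v hv hu₀ hv₀ h with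
    ⟨rfl, -⟩ | ⟨-, rfl⟩ <;> simp

theorem two_le_labF_of_adj_low_matching {ι : Type*} [Fintype ι] (hcard : j < Fintype.card ι)
    {e : ι × Fin 2 → Fin j ⊕ (V₁ ⊕ V₂ ⊕ V₃)} (he : Injective e) (hlow : ∀ p, labF (e p) ≤ 1)
    (hedge : ∀ i, (hostGraph j x y hxy).Adj (e (i, 0)) (e (i, 1)))
    (hw : ∀ p, (hostGraph j x y hxy).Adj w (e p)) : 2 ≤ labF w := by
  classical
  by_contra! hwlow
  have : Nonempty ι := Fintype.card_pos_iff.mp (by omega)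
  have hlt := card_lt_card_of_cover_of_matching_apex hostGraph_low_cover he hlow hedge
    (show labF w ≤ 1 by omega) hw
  have := card_insert_le (Sum.inr (Sum.inl x) : Fin j ⊕ (V₁ ⊕ V₂ ⊕ V₃))
    (cliqueVertices j V₁ V₂ V₃)
  simp only [card_cliqueVertices] at this
  omega

theorem card_add_card_le_of_low_completeBipartite {ιA ιB : Type*} [Fintype ιA] [Fintype ιB]
    (hA : j < Fintype.card ιA) (hB : j < Fintype.card ιB)
    {ψ : ιA ⊕ ιB → Fin j ⊕ (V₁ ⊕ V₂ ⊕ V₃)} (hψ : Injective ψ) (hlow : ∀ p, labF (ψ p) ≤ 1)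
    (hadj : ∀ a b, (hostGraph j x y hxy).Adj (ψ (.inl a)) (ψ (.inr b))) :
    Fintype.card ιA + Fintype.card ιB ≤ j + 2 := by
  simpa using card_add_card_le_of_completeBipartite hostGraph_adj_of_low_of_notMem_cliqueVertices
    hψ hlow hadj (by simpa using hA) (by simpa using hB)

end HostGraph

/-- The perfect matching of `P₄ ∪ M_m` formed by the edges `01`, `23` of `P₄` and the edges
of `M_m`. -/
def pathMatchingEndpoint (m : ℕ) : (Fin 2 ⊕ Fin m) × Fin 2 ≃ Fin 4 ⊕ Fin m × Fin 2 :=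
  (Equiv.sumProdDistrib _ _ _).trans (Equiv.sumCongr finProdFinEquiv (Equiv.refl _))

theorem pathMatchingEndpoint_adj (m : ℕ) (e : Fin 2 ⊕ Fin m) :
    (pathGraph 4 ⊕g matchingGraph m).Adj (pathMatchingEndpoint m (e, 0))
      (pathMatchingEndpoint m (e, 1)) := by
  rcases e with i | i
  · simp only [pathMatchingEndpoint, Equiv.trans_apply, Equiv.sumProdDistrib_apply_left,
      Equiv.sumCongr_apply, Sum.map_inl, sum_adj_inl, pathGraph_adj]
    fin_cases i <;> decide
  · exact ⟨rfl, zero_ne_one⟩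

theorem stmt_15_general (k : ℕ) (hk : 2 ≤ k) {V₁ V₂ V₃ : Type*}
    (x y : V₁) (hxy : x ≠ y)
    (φ : (Fin k × Fin 2) ⊕ (Fin 4 ⊕ Fin (k - 2) × Fin 2) →
      Fin (k - 1) ⊕ (V₁ ⊕ V₂ ⊕ V₃))
    (hinj : Function.Injective φ)
    (hhom : ∀ u v, (joinG (matchingGraph k) ((pathGraph 4) ⊕g matchingGraph (k - 2))).Adj u v →
      (hostGraph (k - 1) x y hxy).Adj (φ u) (φ v)) :
    ((∀ a : Fin k × Fin 2, labF (φ (Sum.inl a)) ≤ 1) ∧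
      (∀ b : Fin 4 ⊕ Fin (k - 2) × Fin 2, 2 ≤ labF (φ (Sum.inr b)))) ∨
    ((∀ b : Fin 4 ⊕ Fin (k - 2) × Fin 2, labF (φ (Sum.inr b)) ≤ 1) ∧
      (∀ a : Fin k × Fin 2, 2 ≤ labF (φ (Sum.inl a)))) := by
  set f := pathMatchingEndpoint (k - 2)
  have hjoin a b : (hostGraph (k - 1) x y hxy).Adj (φ (.inl a)) (φ (.inr b)) := hhom _ _ trivial
  have hedgeA (i : Fin k) : (hostGraph (k - 1) x y hxy).Adj (φ (.inl (i, 0))) (φ (.inl (i, 1))) :=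
    hhom _ _ ⟨rfl, zero_ne_one⟩
  have hedgeB e : (hostGraph (k - 1) x y hxy).Adj (φ (.inr (f (e, 0)))) (φ (.inr (f (e, 1)))) :=
    hhom _ _ (pathMatchingEndpoint_adj _ e)
  have hcardA : k - 1 < Fintype.card (Fin k) := by rw [Fintype.card_fin]; omega
  have hcardB : k - 1 < Fintype.card (Fin 2 ⊕ Fin (k - 2)) := by
    rw [Fintype.card_sum, Fintype.card_fin, Fintype.card_fin]; omega
  by_cases hlowA : ∀ a, labF (φ (.inl a)) ≤ 1
  · exact .inl ⟨hlowA, fun b => two_le_labF_of_adj_low_matching hcardA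
      (hinj.comp Sum.inl_injective) hlowA hedgeA fun p => (hjoin p b).symm⟩
  by_cases hlowB : ∀ b, labF (φ (.inr b)) ≤ 1
  · exact .inr ⟨hlowB, fun a => two_le_labF_of_adj_low_matching hcardB
      (hinj.comp (Sum.inr_injective.comp f.injective)) (fun _ => hlowB _) hedgeB
      fun p => hjoin a _⟩
  push Not at hlowA hlowB
  obtain ⟨a₀, ha₀⟩ := hlowA
  obtain ⟨b₀, hb₀⟩ := hlowB
  choose tA htA using fun i => exists_labF_le_one_of_hostGraph_adj_of_high
    (u := fun t => φ (.inl (i, t))) (hedgeA i) (by omega) fun _ => (hjoin _ b₀).symm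
  choose tB htB using fun e => exists_labF_le_one_of_hostGraph_adj_of_high
    (u := fun t => φ (.inr (f (e, t)))) (hedgeB e) (by omega) fun _ => hjoin a₀ _
  have hsel : Injective (Sum.map (fun i => (i, tA i)) fun e => f (e, tB e)) :=
    Sum.map_injective.mpr ⟨fun _ _ h => congrArg Prod.fst h,
      fun _ _ h => congrArg Prod.fst (f.injective h)⟩
  have := card_add_card_le_of_low_completeBipartite hcardA hcardB (hinj.comp hsel)
    (by rintro (i | e); exacts [htA i, htB e]) fun _ _ => hjoin _ _
  simp only [Fintype.card_fin, Fintype.card_sum] at this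
  omega

/-- In every copy of `F = M_k + (P₄ ∪ M_{k-2})` in the host graph
`H = K_{k-1} + K(V₁,V₂,V₃)` plus one edge `xy` inside `V₁` (with `|V_i| ≥ 3k`), either all
vertices of the `M_k` side lie in `X ∪ V₁` and all vertices of the `P₄ ∪ M_{k-2}` side lie in
`V₂ ∪ V₃`, or vice versa. -/
theorem stmt_15 (k : ℕ) (hk : 2 ≤ k) {V₁ V₂ V₃ : Type*}
    [Fintype V₁] [Fintype V₂] [Fintype V₃]
    (hc1 : 3 * k ≤ Fintype.card V₁) (hc2 : 3 * k ≤ Fintype.card V₂)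
    (hc3 : 3 * k ≤ Fintype.card V₃)
    (x y : V₁) (hxy : x ≠ y)
    (φ : (Fin k × Fin 2) ⊕ (Fin 4 ⊕ Fin (k - 2) × Fin 2) →
      Fin (k - 1) ⊕ (V₁ ⊕ V₂ ⊕ V₃))
    (hinj : Function.Injective φ)
    (hhom : ∀ u v, (joinG (matchingGraph k) ((pathGraph 4) ⊕g matchingGraph (k - 2))).Adj u v →
      (hostGraph (k - 1) x y hxy).Adj (φ u) (φ v)) :
    ((∀ a : Fin k × Fin 2, labF (φ (Sum.inl a)) ≤ 1) ∧
      (∀ b : Fin 4 ⊕ Fin (k - 2) × Fin 2, 2 ≤ labF (φ (Sum.inr b)))) ∨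
    ((∀ b : Fin 4 ⊕ Fin (k - 2) × Fin 2, labF (φ (Sum.inr b)) ≤ 1) ∧
      (∀ a : Fin k × Fin 2, 2 ≤ labF (φ (Sum.inl a)))) :=
  stmt_15_general k hk x y hxy φ hinj hhom
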